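/- arXiv:2102.08097 — 2 statements merged into one kernel-verified Lean document; each statement's English description precedes it below -/
import Mathlib

section
/- Let 1 < p < ∞ and 1 < q < ∞ with 1/p + 1/q = 1. For every ε > 0 there exists δ > 0 with the following property: if a, b > 0 satisfy a^p/p + b^q/q ≤ ab/(1−δ), then |a^{p/q}/b − 1| < ε. -/
/-!
Put `r = a^{p/q}/b`. Then `a^p/p + b^q/q = ab · φ(log r)` with
`φ t = eᵗ/p + e^{(1-q)t}/q` (`youngRatio p q`). By strict convexity of `exp` (the equality case of Young's inequality) `φ 0 = 1 < φ t` for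
`t ≠ 0`, and `φ` is convex, so outside `(-L, L)` it stays above `min (φ (-L)) (φ L) > 1`.
Hence `a^p/p + b^q/q ≤ ab/(1-δ)` with `δ` small forces `|log r| < L := log (1 + ε)`.
-/

open Real Set

theorem ConvexOn.exists_forall_lt_imp_mem_Ioo {s : Set ℝ} {f : ℝ → ℝ} (hf : ConvexOn ℝ s f)
    {c x y : ℝ} (hx : x ∈ s) (hy : y ∈ s) (hxc : x < c) (hcy : c < y)
    (hmin : ∀ t ∈ s, t ≠ c → f c < f t) :
    ∃ m, f c < m ∧ ∀ t ∈ s, f t < m → t ∈ Ioo x y := by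
  have hc : c ∈ s := hf.1.ordConnected.out hx hy ⟨hxc.le, hcy.le⟩
  refine ⟨min (f x) (f y), lt_min (hmin x hx hxc.ne) (hmin y hy hcy.ne'), fun t ht hft => ?_⟩
  constructor
  · by_contra! htx
    have : f x ≤ f t := by
      rcases htx.eq_or_lt with rfl | htx
      · rfl
      refine hf.le_right_of_left_le hc ht ?_ (hmin x hx hxc.ne).le
      rw [openSegment_symm, openSegment_eq_Ioo (htx.trans hxc)]
      exact ⟨htx, hxc⟩
    exact (min_le_left _ _).not_gt (this.trans_lt hft)
  · by_contra! hyt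
    have : f y ≤ f t := by
      rcases hyt.eq_or_lt with rfl | hyt
      · rfl
      refine hf.le_right_of_left_le hc ht ?_ (hmin y hy hcy.ne').le
      rw [openSegment_eq_Ioo (hcy.trans hyt)]
      exact ⟨hcy, hyt⟩
    exact (min_le_right _ _).not_gt (this.trans_lt hft)

theorem abs_sub_one_lt_of_abs_log_lt {r ε : ℝ} (hr : 0 < r) (hε : 0 < ε)
    (h : |log r| < log (1 + ε)) : |r - 1| < ε := by
  obtain ⟨hlog_lower, hlog_upper⟩ := abs_lt.1 h
  have hupper : r < 1 + ε := (log_lt_log_iff hr (by linarith)).1 hlog_upper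
  have hlower : (1 + ε)⁻¹ < r :=
    (log_lt_log_iff (by positivity) hr).1 (by rwa [log_inv])
  have : 1 - ε < (1 + ε)⁻¹ := by
    rw [← one_div, lt_div_iff₀ (by linarith)]
    nlinarith
  rw [abs_sub_lt_iff]
  constructor <;> linarith

noncomputable def youngRatio (p q t : ℝ) : ℝ := exp t / p + exp ((1 - q) * t) / q

namespace Real.HolderConjugate

variable {p q : ℝ} (hpq : p.HolderConjugate q)
include hpq

theorem youngRatio_zero : youngRatio p q 0 = 1 := by
  simpa [youngRatio, div_eq_mul_inv, mul_comm] using hpq.inv_add_inv_eq_one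

theorem one_lt_youngRatio {t : ℝ} (ht : t ≠ 0) : 1 < youngRatio p q t := by
  have hne : t ≠ (1 - q) * t := by
    intro h
    apply ht
    nlinarith [hpq.symm.pos, h]
  have hcomb : p⁻¹ * t + q⁻¹ * ((1 - q) * t) = 0 := by
    linear_combination t * hpq.inv_add_inv_eq_one - t * mul_inv_cancel₀ hpq.symm.ne_zero
  simpa [hcomb, youngRatio, div_eq_inv_mul] using
    strictConvexOn_exp.2 (mem_univ t) (mem_univ ((1 - q) * t)) hne hpq.inv_pos
      hpq.symm.inv_pos hpq.inv_add_inv_eq_one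

theorem convexOn_youngRatio : ConvexOn ℝ univ (youngRatio p q) := by
  have hexp : ConvexOn ℝ univ fun t => exp ((1 - q) * t) := by
    exact convexOn_exp.comp_linearMap ((1 - q) • LinearMap.id)
  have hsum : youngRatio p q = fun t => p⁻¹ • exp t + q⁻¹ • exp ((1 - q) * t) := by
    ext t
    simp only [youngRatio, smul_eq_mul, div_eq_inv_mul]
  rw [hsum]
  exact (convexOn_exp.smul hpq.inv_nonneg).add (hexp.smul hpq.symm.inv_nonneg)

theorem rpow_div_add_rpow_div_eq_mul_youngRatio {a b : ℝ} (ha : 0 < a) (hb : 0 < b) :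
    a ^ p / p + b ^ q / q = a * b * youngRatio p q (log (a ^ (p / q) / b)) := by
  obtain ⟨x, rfl⟩ : ∃ x, exp x = a := ⟨log a, exp_log ha⟩
  obtain ⟨y, rfl⟩ : ∃ y, exp y = b := ⟨log b, exp_log hb⟩
  simp only [youngRatio, ← exp_mul, ← exp_sub, log_exp, mul_add, ← exp_add, mul_div_assoc',
    hpq.div_conj_eq_sub_one]
  congr 3
  · ring
  · linear_combination x * hpq.mul_eq_add

end Real.HolderConjugate

theorem statement8_general (p q : ℝ) (hp : 1 < p) (hpq : 1 / p + 1 / q = 1) :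
    ∀ ε : ℝ, 0 < ε → ∃ δ : ℝ, 0 < δ ∧
      ∀ a b : ℝ, 0 < a → 0 < b →
        a ^ p / p + b ^ q / q ≤ a * b / (1 - δ) →
        |a ^ (p / q) / b - 1| < ε := by
  have hconj : p.HolderConjugate q := Real.holderConjugate_iff.2 ⟨hp, by simpa using hpq⟩
  intro ε hε
  have hL : 0 < log (1 + ε) := log_pos (by linarith)
  obtain ⟨m, hm, hgap⟩ := hconj.convexOn_youngRatio.exists_forall_lt_imp_mem_Ioo
    (mem_univ _) (mem_univ _) (neg_neg_of_pos hL) hL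
    fun t _ ht => hconj.youngRatio_zero ▸ hconj.one_lt_youngRatio ht
  rw [hconj.youngRatio_zero] at hm
  refine ⟨1 - 2 / (1 + m), by rw [sub_pos, div_lt_one (by linarith)]; linarith,
    fun a b ha hb hab => ?_⟩
  have hab_pos : 0 < a * b := mul_pos ha hb
  have hlt : youngRatio p q (log (a ^ (p / q) / b)) < m := by
    rw [hconj.rpow_div_add_rpow_div_eq_mul_youngRatio ha hb, sub_sub_cancel,
      div_div_eq_mul_div] at hab
    have := le_of_mul_le_mul_left (hab.trans_eq (mul_div_assoc _ _ _)) hab_pos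
    linarith
  exact abs_sub_one_lt_of_abs_log_lt (by positivity) hε
    (abs_lt.2 (hgap _ (mem_univ _) hlt))

/-- Lemma 3.7, a stable Young inequality. Let `1 < p, q < ∞` be conjugate
exponents. For every `ε > 0` there exists `δ > 0` such that whenever `a, b > 0` satisfy
`a^p/p + b^q/q ≤ ab/(1−δ)`, one has `|a^{p/q}/b − 1| < ε`. -/
theorem statement8 (p q : ℝ) (hp : 1 < p) (hq : 1 < q) (hpq : 1 / p + 1 / q = 1) :
    ∀ ε : ℝ, 0 < ε → ∃ δ : ℝ, 0 < δ ∧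
      ∀ a b : ℝ, 0 < a → 0 < b →
        a ^ p / p + b ^ q / q ≤ a * b / (1 - δ) →
        |a ^ (p / q) / b - 1| < ε :=
  statement8_general p q hp hpq
end

section
/- Let h ≤ g be two Lebesgue-integrable functions on the interval I = [0,1], and let (T_n) ⊂ (0,1] be a sequence such that liminf_{n→∞} (1/T_n) ∫_0^{T_n} g ds = A > 0 and lim_{n→∞} (1/T_n) ∫_0^{T_n} (g − h) ds = 0. Then for every ε > 0 there exists n_0 such that for all n ≥ n_0 the set {t ∈ [0, T_n] : (1−ε) g(t) < h(t)} has positive Lebesgue measure. -/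
open MeasureTheory Filter Set Topology

/-!
If `h ≤ (1 - ε) g` held almost everywhere on `(0, T]`, then `ε ∫₀^T g ≤ ∫₀^T (g - h)`.
Along the sequence the average of `g` eventually exceeds `A / 2` while the average of `g - h`
eventually drops below `ε A / 2`, so this inequality fails for all large `n`.
-/

/-- In `ℝ` the junk `liminf` of a function not eventually bounded below is `0`. -/
lemma Real.isBoundedUnder_ge_of_liminf_ne_zero {α : Type*} {f : Filter α} {u : α → ℝ}
    (hu : liminf u f ≠ 0) : f.IsBoundedUnder (· ≥ ·) u := by
  by_contra hb
  exact hu (Real.liminf_of_not_isBoundedUnder hb)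

lemma ae_restrict_not_of_measure_sep_eq_zero {α : Type*} [MeasurableSpace α] {μ : Measure α}
    {s : Set α} {p : α → Prop} (hs : MeasurableSet s) (h : μ {t ∈ s | p t} = 0) :
    ∀ᵐ t ∂μ.restrict s, ¬ p t := by
  rw [ae_restrict_iff' hs, ae_iff]
  simpa only [Classical.not_imp, not_not] using h

lemma measure_sep_pos_of_setIntegral_sub_lt {α : Type*} [MeasurableSpace α] {μ : Measure α}
    {s : Set α} {g h : α → ℝ} {ε : ℝ} (hs : MeasurableSet s)
    (hg : IntegrableOn g s μ) (hh : IntegrableOn h s μ)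
    (hlt : ∫ t in s, (g t - h t) ∂μ < ε * ∫ t in s, g t ∂μ) :
    0 < μ {t ∈ s | (1 - ε) * g t < h t} := by
  refine pos_iff_ne_zero.2 fun hzero => hlt.not_ge ?_
  have hae : ∀ᵐ t ∂μ.restrict s, ε * g t ≤ g t - h t :=
    (ae_restrict_not_of_measure_sep_eq_zero hs hzero).mono fun t ht => by
      rw [not_lt] at ht
      linarith
  rw [← integral_const_mul]
  exact integral_mono_ae (hg.const_mul ε) (hg.sub hh) hae

theorem statement9_general
    (h g : ℝ → ℝ)
    (hint : IntegrableOn h (Set.Icc 0 1)) (gint : IntegrableOn g (Set.Icc 0 1))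
    (T : ℕ → ℝ) (hT : ∀ n, T n ∈ Set.Ioc (0:ℝ) 1)
    (A : ℝ) (hA : 0 < A)
    (hliminf : Filter.liminf (fun n => (1 / T n) * ∫ s in Set.Ioc 0 (T n), g s) atTop = A)
    (hlim : Tendsto (fun n => (1 / T n) * ∫ s in Set.Ioc 0 (T n), (g s - h s)) atTop (𝓝 0)) :
    ∀ ε : ℝ, 0 < ε → ∃ n₀ : ℕ, ∀ n ≥ n₀,
      0 < volume {t ∈ Set.Icc (0:ℝ) (T n) | (1 - ε) * g t < h t} := by
  intro ε hε
  have hg_avg : ∀ᶠ n in atTop, A / 2 < (1 / T n) * ∫ s in Set.Ioc 0 (T n), g s :=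
    eventually_lt_of_lt_liminf (by linarith)
      (Real.isBoundedUnder_ge_of_liminf_ne_zero (hliminf ▸ hA.ne'))
  have hgh_avg : ∀ᶠ n in atTop, (1 / T n) * ∫ s in Set.Ioc 0 (T n), (g s - h s) < ε * (A / 2) :=
    hlim.eventually_lt_const (by positivity)
  obtain ⟨n₀, hn₀⟩ := (hg_avg.and hgh_avg).exists_forall_of_atTop
  refine ⟨n₀, fun n hn => ?_⟩
  obtain ⟨hg_n, hgh_n⟩ := hn₀ n hn
  have hsub : Set.Ioc 0 (T n) ⊆ Set.Icc 0 1 :=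
    Ioc_subset_Icc_self.trans (Icc_subset_Icc_right (hT n).2)
  have hlt : (1 / T n) * ∫ s in Set.Ioc 0 (T n), (g s - h s)
      < (1 / T n) * (ε * ∫ s in Set.Ioc 0 (T n), g s) := by
    rw [mul_left_comm]
    exact hgh_n.trans ((mul_lt_mul_iff_right₀ hε).2 hg_n)
  refine (measure_sep_pos_of_setIntegral_sub_lt measurableSet_Ioc (gint.mono_set hsub)
    (hint.mono_set hsub) (lt_of_mul_lt_mul_left hlt (one_div_nonneg.2 (hT n).1.le))).trans_le ?_
  exact measure_mono fun t ht => ⟨Ioc_subset_Icc_self ht.1, ht.2⟩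

/-- Lemma 3.8. Let `h ≤ g` be integrable on `[0,1]` and `(T_n) ⊆ (0,1]`
with `liminf (1/T_n)∫₀^{T_n} g = A > 0` and `(1/T_n)∫₀^{T_n}(g−h) → 0`. Then for every
`ε > 0` eventually the set `{t ∈ [0,T_n] : (1−ε)g(t) < h(t)}` has positive measure. -/
theorem statement9
    (h g : ℝ → ℝ)
    (hint : IntegrableOn h (Set.Icc 0 1)) (gint : IntegrableOn g (Set.Icc 0 1))
    (hle : ∀ᵐ t ∂(volume.restrict (Set.Icc (0:ℝ) 1)), h t ≤ g t)
    (T : ℕ → ℝ) (hT : ∀ n, T n ∈ Set.Ioc (0:ℝ) 1)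
    (A : ℝ) (hA : 0 < A)
    (hliminf : Filter.liminf (fun n => (1 / T n) * ∫ s in Set.Ioc 0 (T n), g s) atTop = A)
    (hlim : Tendsto (fun n => (1 / T n) * ∫ s in Set.Ioc 0 (T n), (g s - h s)) atTop (𝓝 0)) :
    ∀ ε : ℝ, 0 < ε → ∃ n₀ : ℕ, ∀ n ≥ n₀,
      0 < volume {t ∈ Set.Icc (0:ℝ) (T n) | (1 - ε) * g t < h t} :=
  statement9_general h g hint gint T hT A hA hliminf hlim
end
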